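/- arXiv:2108.11039 — 3 statements merged into one kernel-verified Lean document; each statement's English description precedes it below -/
import Mathlib

section
/- Let γ_0,…,γ_{n−1} be complex numbers with |γ_k| < 1 for k ≤ n−2 and |γ_{n−1}| = 1, γ_{n−1} ≠ 1. Define w_k, v_k ∈ ℝ by 2γ_k/(1−γ_k) = w_k − i v_k, and set x_0 = 0, y_0 = 1, x_{k+1} = x_k + v_k y_k, y_{k+1} = y_k(1 + w_k). Then y_k > 0 for 0 ≤ k ≤ n−1 and y_n = 0. -/
lemma key_re (z : ℂ) (hz : z ≠ 1) :
    1 + (2 * z / (1 - z)).re = (1 - Complex.normSq z) / Complex.normSq (1 - z) := by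
  have hd : (1 : ℂ) - z ≠ 0 := sub_ne_zero.mpr hz.symm
  have hns : Complex.normSq (1 - z) ≠ 0 := by
    simpa [Complex.normSq_eq_zero] using hd
  have heq : Complex.normSq (1 - z) = 1 - z.re * 2 + z.re ^ 2 + z.im ^ 2 := by
    simp [Complex.normSq_apply]; ring
  have ht : 1 - z.re * 2 + z.re ^ 2 + z.im ^ 2 ≠ 0 := heq ▸ hns
  rw [eq_div_iff hns, Complex.div_re, heq, Complex.normSq_apply]
  field_simp
  simp only [Complex.mul_re, Complex.mul_im, Complex.sub_re, Complex.sub_im, Complex.one_re, Complex.one_im, Complex.re_ofNat, Complex.im_ofNat]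
  ring

/-- The generating path recursion: if `|γ_k| < 1` for `k ≤ n-2`, `|γ_{n-1}| = 1`,
`γ_{n-1} ≠ 1`, and `x, y` solve the recursion `x_{k+1} = x_k + v_k y_k`,
`y_{k+1} = y_k (1 + w_k)` with `2γ_k/(1-γ_k) = w_k - i v_k`, `x_0 = 0`, `y_0 = 1`,
then `y_k > 0` for `0 ≤ k ≤ n-1` and `y_n = 0`. -/
theorem stmt2 (n : ℕ) (hn : 0 < n) (γ : ℕ → ℂ)
    (h1 : ∀ k < n - 1, ‖γ k‖ < 1)
    (h2 : ‖γ (n - 1)‖ = 1) (h3 : γ (n - 1) ≠ 1)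
    (w v : ℕ → ℝ)
    (hw : ∀ k, w k = (2 * γ k / (1 - γ k)).re)
    (hv : ∀ k, v k = -(2 * γ k / (1 - γ k)).im)
    (x y : ℕ → ℝ) (hx0 : x 0 = 0) (hy0 : y 0 = 1)
    (hx : ∀ k, x (k + 1) = x k + v k * y k)
    (hy : ∀ k, y (k + 1) = y k * (1 + w k)) :
    (∀ k ≤ n - 1, 0 < y k) ∧ y n = 0 := by
  have hpos : ∀ k ≤ n - 1, 0 < y k := by
    intro k hk
    induction k with
    | zero => simpa [hy0]
    | succ m ih =>
      have hm : m < n - 1 := lt_of_lt_of_le (Nat.lt_succ_self m) hk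
      have hym : 0 < y m := ih (le_of_lt hm)
      have hγ := h1 m hm
      have hne : γ m ≠ 1 := by
        intro h; rw [h] at hγ; simp at hγ
      have hw1 : 0 < 1 + w m := by
        rw [hw m, key_re _ hne]
        apply div_pos
        · have : Complex.normSq (γ m) < 1 := by
            rw [← Complex.sq_norm]
            nlinarith [norm_nonneg (γ m)]
          linarith
        · have hd : (1 : ℂ) - γ m ≠ 0 := sub_ne_zero.mpr hne.symm
          exact Complex.normSq_pos.mpr hd
      rw [hy m]
      exact mul_pos hym hw1
  refine ⟨hpos, ?_⟩
  have hzero : 1 + w (n - 1) = 0 := by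
    rw [hw, key_re _ h3]
    have : Complex.normSq (γ (n - 1)) = 1 := by
      rw [← Complex.sq_norm, h2]; norm_num
    simp [this]
  have : y n = y (n - 1) * (1 + w (n - 1)) := by
    have := hy (n - 1)
    rwa [Nat.sub_add_cancel hn] at this
  rw [this, hzero, mul_zero]
end

section
/- Let R : [0,1) → M₂(ℝ) be the weight function built from a locally bounded measurable path x+iy : [0,1) → ℍ via R = (1/2)XᵗX with X = y^{−1/2}·[[1,−x],[0,y]]. Suppose there are constants κ > 0, c_1, c_2 > −1 with c_1 > c_2 − 2, c_3 > 0 with c_3 > c_2 − 1, and q ∈ ℝ such that κ^{−1}(1−t)^{c_2} ≤ y(t) ≤ κ(1−t)^{c_1} and |q − x(t)| ≤ κ(1−t)^{c_3} for all t ∈ [0,1). Then with u_0 = [1,0]ᵗ and u_1 = [−q,−1]ᵗ, both ∫_0^1 ‖R(s)u_1‖ ds < ∞ and ∫_0^1 ∫_0^t u_0ᵗR(s)u_0 · u_1ᵗR(t)u_1 ds dt < ∞. -/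
open MeasureTheory Matrix

@[fun_prop] lemma stmt12_measurable_sqrt : Measurable Real.sqrt :=
  Real.continuous_sqrt.measurable

lemma stmt12_aux_int (r : ℝ) (hr : -1 < r) :
    IntegrableOn (fun s : ℝ => (1 - s) ^ r) (Set.Ico (0:ℝ) 1) := by
  have h := (intervalIntegral.intervalIntegrable_rpow' (a := 0) (b := 1) (r := r) hr).comp_sub_left 1
  simp only [sub_zero, sub_self] at h
  have h2 : IntegrableOn (fun s : ℝ => (1 - s) ^ r) (Set.Ioc (0:ℝ) 1) := by
    have := h.symm
    rw [intervalIntegrable_iff, Set.uIoc_of_le (by norm_num : (0:ℝ) ≤ 1)] at this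
    exact this
  rw [IntegrableOn, Measure.restrict_congr_set Ico_ae_eq_Ioc]
  exact h2

lemma stmt12_aux_meas (x y : ℝ → ℝ) (hxm : Measurable x) (hym : Measurable y) (u v : Fin 2 → ℝ) :
    Measurable (fun s => u ⬝ᵥ ((1 / 2 : ℝ) • ((((Real.sqrt (y s))⁻¹ • !![1, -x s; 0, y s]))ᵀ
      * ((Real.sqrt (y s))⁻¹ • !![1, -x s; 0, y s]))).mulVec v) := by
  simp [Matrix.mulVec, dotProduct, Fin.sum_univ_two, Matrix.mul_apply,
    Matrix.transpose_apply, Matrix.vecHead, Matrix.vecTail]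
  fun_prop

lemma stmt12_aux_measV (x y : ℝ → ℝ) (hxm : Measurable x) (hym : Measurable y) (q : ℝ) :
    Measurable (fun s => ‖((1 / 2 : ℝ) • ((((Real.sqrt (y s))⁻¹ • !![1, -x s; 0, y s]))ᵀ
      * ((Real.sqrt (y s))⁻¹ • !![1, -x s; 0, y s]))).mulVec ![-q,-1]‖) := by
  apply Measurable.norm
  apply measurable_pi_lambda
  intro i
  fin_cases i <;>
  · simp [Matrix.mulVec, dotProduct, Fin.sum_univ_two, Matrix.mul_apply,
      Matrix.transpose_apply, Matrix.vecHead, Matrix.vecTail]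
    fun_prop

lemma stmt12_aux_R0 (x y : ℝ) (hy : 0 < y) :
    (![1,0] : Fin 2 → ℝ) ⬝ᵥ ((1 / 2 : ℝ) • ((((Real.sqrt y)⁻¹ • !![1, -x; 0, y]))ᵀ
      * ((Real.sqrt y)⁻¹ • !![1, -x; 0, y]))).mulVec ![1,0] = (2 * y)⁻¹ := by
  have hs : Real.sqrt y ^ 2 = y := Real.sq_sqrt hy.le
  have hs0 : Real.sqrt y ≠ 0 := by positivity
  simp only [Matrix.mulVec, dotProduct, Fin.sum_univ_two, Matrix.smul_apply,
    Matrix.mul_apply, Matrix.transpose_apply, Matrix.cons_val_zero, Matrix.cons_val_one,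
    Matrix.head_cons, Matrix.head_fin_const, smul_eq_mul, Matrix.cons_val', Matrix.empty_val',
    Matrix.cons_val_fin_one, Matrix.of_apply]
  field_simp
  rw [hs]; ring

lemma stmt12_aux_R1 (x y q : ℝ) (hy : 0 < y) :
    (![-q,-1] : Fin 2 → ℝ) ⬝ᵥ ((1 / 2 : ℝ) • ((((Real.sqrt y)⁻¹ • !![1, -x; 0, y]))ᵀ
      * ((Real.sqrt y)⁻¹ • !![1, -x; 0, y]))).mulVec ![-q,-1]
      = ((q - x)^2 + y^2) / (2 * y) := by
  have hs : Real.sqrt y ^ 2 = y := Real.sq_sqrt hy.le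
  have hs0 : Real.sqrt y ≠ 0 := by positivity
  simp only [Matrix.mulVec, dotProduct, Fin.sum_univ_two, Matrix.smul_apply,
    Matrix.mul_apply, Matrix.transpose_apply, Matrix.cons_val_zero, Matrix.cons_val_one,
    Matrix.head_cons, Matrix.head_fin_const, smul_eq_mul, Matrix.cons_val', Matrix.empty_val',
    Matrix.cons_val_fin_one, Matrix.of_apply]
  field_simp
  rw [hs]
  ring_nf

lemma stmt12_aux_Rv (x y q : ℝ) (hy : 0 < y) :
    ((1 / 2 : ℝ) • ((((Real.sqrt y)⁻¹ • !![1, -x; 0, y]))ᵀ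
      * ((Real.sqrt y)⁻¹ • !![1, -x; 0, y]))).mulVec ![-q,-1]
      = ![(x - q)/(2*y), (x*(q-x) - y^2)/(2*y)] := by
  have hs : Real.sqrt y ^ 2 = y := Real.sq_sqrt hy.le
  have hs0 : Real.sqrt y ≠ 0 := by positivity
  funext i
  fin_cases i <;>
  · simp only [Matrix.mulVec, dotProduct, Fin.sum_univ_two, Matrix.smul_apply,
      Matrix.mul_apply, Matrix.transpose_apply, Matrix.cons_val_zero, Matrix.cons_val_one,
      Matrix.head_cons, Matrix.head_fin_const, smul_eq_mul, Matrix.cons_val', Matrix.empty_val',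
      Matrix.cons_val_fin_one, Matrix.of_apply, Fin.zero_eta, Fin.mk_one]
    field_simp
    rw [hs]
    ring_nf


set_option maxHeartbeats 1000000 in
/-- Integrability assumptions for the Dirac operator hold under power-law bounds on
the generating path: if `κ⁻¹(1-t)^{c₂} ≤ y(t) ≤ κ(1-t)^{c₁}` and
`|q - x(t)| ≤ κ(1-t)^{c₃}` with `c₁, c₂ > -1`, `c₁ > c₂ - 2`, `c₃ > 0`,
`c₃ > c₂ - 1`, then `∫₀¹ ‖R(s)u₁‖ ds < ∞` and
`∫₀¹∫₀ᵗ u₀ᵗR(s)u₀ · u₁ᵗR(t)u₁ ds dt < ∞`. -/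
theorem stmt12 (x y : ℝ → ℝ) (hxm : Measurable x) (hym : Measurable y)
    (hy : ∀ t ∈ Set.Ico (0 : ℝ) 1, 0 < y t)
    (κ c₁ c₂ c₃ q : ℝ) (hκ : 0 < κ) (hc1 : -1 < c₁) (hc2 : -1 < c₂)
    (h12 : c₂ - 2 < c₁) (hc3 : 0 < c₃) (h32 : c₂ - 1 < c₃)
    (hylb : ∀ t ∈ Set.Ico (0 : ℝ) 1, κ⁻¹ * (1 - t) ^ c₂ ≤ y t)
    (hyub : ∀ t ∈ Set.Ico (0 : ℝ) 1, y t ≤ κ * (1 - t) ^ c₁)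
    (hx : ∀ t ∈ Set.Ico (0 : ℝ) 1, |q - x t| ≤ κ * (1 - t) ^ c₃) :
    let X : ℝ → Matrix (Fin 2) (Fin 2) ℝ :=
      fun t => (Real.sqrt (y t))⁻¹ • !![1, -x t; 0, y t]
    let R : ℝ → Matrix (Fin 2) (Fin 2) ℝ := fun t => (1 / 2 : ℝ) • ((X t)ᵀ * X t)
    let u₀ : Fin 2 → ℝ := ![1, 0]
    let u₁ : Fin 2 → ℝ := ![-q, -1]
    IntegrableOn (fun s => ‖(R s).mulVec u₁‖) (Set.Ico 0 1) ∧
    IntegrableOn (fun p : ℝ × ℝ =>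
        (u₀ ⬝ᵥ (R p.1).mulVec u₀) * (u₁ ⬝ᵥ (R p.2).mulVec u₁))
      {p : ℝ × ℝ | 0 ≤ p.1 ∧ p.1 ≤ p.2 ∧ p.2 < 1} := by
  intro X R u₀ u₁
  -- basic bounds valid on [0,1)
  have key : ∀ s ∈ Set.Ico (0:ℝ) 1,
      ((2 * y s)⁻¹ ≤ κ/2 * (1-s)^(-c₂)) ∧ |q - x s| ≤ κ * (1-s)^c₃ ∧ y s ≤ κ * (1-s)^c₁ := by
    intro s hs
    have hP : (0:ℝ) < 1 - s := by linarith [hs.2]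
    have hys := hy s hs
    refine ⟨?_, hx s hs, hyub s hs⟩
    have h1 : (0:ℝ) < κ⁻¹ * (1-s) ^ c₂ := by positivity
    have h2 := inv_anti₀ h1 (hylb s hs)
    rw [mul_inv, inv_inv, ← Real.rpow_neg hP.le] at h2
    calc (2 * y s)⁻¹ = 2⁻¹ * (y s)⁻¹ := by rw [mul_inv]
      _ ≤ 2⁻¹ * (κ * (1-s)^(-c₂)) := by
          exact mul_le_mul_of_nonneg_left h2 (by norm_num)
      _ = κ/2 * (1-s)^(-c₂) := by ring
  constructor
  · -- Part 1
    set g₁ : ℝ → ℝ := fun s =>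
      (|q| + κ + 1) * (κ^2/2 * (1-s)^(c₃-c₂)) + κ/2 * (1-s)^c₁ with hg₁def
    have hg₁ : IntegrableOn g₁ (Set.Ico (0:ℝ) 1) :=
      (((stmt12_aux_int _ (by linarith)).const_mul _).const_mul _).add
        ((stmt12_aux_int _ hc1).const_mul _)
    apply Integrable.mono' hg₁
      ((stmt12_aux_measV x y hxm hym q).aestronglyMeasurable.restrict)
    rw [ae_restrict_iff' measurableSet_Ico]
    refine ae_of_all _ fun s hs => ?_
    have hP : (0:ℝ) < 1 - s := by linarith [hs.2]
    have hP1 : (1:ℝ) - s ≤ 1 := by linarith [hs.1]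
    have hys := hy s hs
    obtain ⟨hk1, hk2, hk3⟩ := key s hs
    rw [norm_norm]
    have hRv : (R s).mulVec u₁ = ![(x s - q)/(2*y s), (x s*(q- x s) - (y s)^2)/(2*y s)] :=
      stmt12_aux_Rv (x s) (y s) q hys
    rw [hRv]
    have hgnn : 0 ≤ g₁ s := by
      have := Real.rpow_nonneg hP.le (c₃ - c₂)
      have := Real.rpow_nonneg hP.le c₁
      have : (0:ℝ) ≤ |q| + κ + 1 := by positivity
      positivity
    rw [pi_norm_le_iff_of_nonneg hgnn]
    have hxs : |x s| ≤ |q| + κ := by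
      have h1 : (1-s)^c₃ ≤ 1 := Real.rpow_le_one hP.le hP1 hc3.le
      have h2 : |x s| ≤ |q| + |q - x s| := by
        have := abs_sub_abs_le_abs_sub (x s) q
        have := abs_sub_comm (x s) q
        calc |x s| ≤ |q| + |x s - q| := by linarith [abs_sub_abs_le_abs_sub (x s) q]
          _ = |q| + |q - x s| := by rw [abs_sub_comm]
      nlinarith [hk2, Real.rpow_nonneg hP.le c₃]
    have hcomp : |x s - q| * (2 * y s)⁻¹ ≤ κ^2/2 * (1-s)^(c₃-c₂) := by
      calc |x s - q| * (2 * y s)⁻¹ ≤ (κ * (1-s)^c₃) * (κ/2 * (1-s)^(-c₂)) := by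
            apply mul_le_mul _ hk1 (by positivity) (by positivity)
            rw [abs_sub_comm]; exact hk2
        _ = κ^2/2 * ((1-s)^c₃ * (1-s)^(-c₂)) := by ring
        _ = κ^2/2 * (1-s)^(c₃-c₂) := by
            rw [← Real.rpow_add hP, ← sub_eq_add_neg]
    intro i
    fin_cases i
    · show |(x s - q)/(2*y s)| ≤ g₁ s
      rw [abs_div, abs_of_pos (by positivity : (0:ℝ) < 2 * y s), div_eq_mul_inv]
      have h1 : (0:ℝ) ≤ κ^2/2 * (1-s)^(c₃-c₂) := by positivity
      have h2 : (0:ℝ) ≤ κ/2 * (1-s)^c₁ := by positivity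
      have h3 : (1:ℝ) ≤ |q| + κ + 1 := by have := abs_nonneg q; linarith
      show |x s - q| * (2*y s)⁻¹ ≤ (|q| + κ + 1) * (κ^2/2 * (1-s)^(c₃-c₂)) + κ/2 * (1-s)^c₁
      nlinarith [hcomp]
    · show |(x s*(q- x s) - (y s)^2)/(2*y s)| ≤ g₁ s
      rw [abs_div, abs_of_pos (by positivity : (0:ℝ) < 2 * y s), div_eq_mul_inv]
      have h4 : |x s*(q- x s) - (y s)^2| ≤ |x s| * |q - x s| + (y s)^2 := by
        have e1 : |x s*(q- x s) - (y s)^2| ≤ |x s*(q- x s)| + |(y s)^2| := abs_sub _ _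
        rw [abs_mul, abs_of_nonneg (sq_nonneg (y s))] at e1
        exact e1
      have h5 : |x s*(q- x s) - (y s)^2| * (2*y s)⁻¹
          ≤ (|x s| * |q - x s|) * (2*y s)⁻¹ + (y s)^2 * (2*y s)⁻¹ := by
        have : (0:ℝ) ≤ (2*y s)⁻¹ := by positivity
        nlinarith [h4]
      have h6 : (y s)^2 * (2*y s)⁻¹ = y s / 2 := by field_simp
      have h7 : (|x s| * |q - x s|) * (2*y s)⁻¹ ≤ (|q| + κ) * (κ^2/2 * (1-s)^(c₃-c₂)) := by
        calc (|x s| * |q - x s|) * (2*y s)⁻¹ = |x s| * (|q - x s| * (2*y s)⁻¹) := by ring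
          _ ≤ (|q| + κ) * (κ^2/2 * (1-s)^(c₃-c₂)) := by
              apply mul_le_mul hxs _ (by positivity) (by positivity)
              rw [abs_sub_comm] at hcomp
              exact hcomp
      have h8 : y s / 2 ≤ κ/2 * (1-s)^c₁ := by linarith
      have h9 : (0:ℝ) ≤ κ^2/2 * (1-s)^(c₃-c₂) := by positivity
      calc |x s*(q- x s) - (y s)^2| * (2*y s)⁻¹
          ≤ (|q| + κ) * (κ^2/2 * (1-s)^(c₃-c₂)) + y s / 2 := by linarith
        _ ≤ (|q| + κ + 1) * (κ^2/2 * (1-s)^(c₃-c₂)) + κ/2 * (1-s)^c₁ := by nlinarith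
        _ = g₁ s := rfl
  · -- Part 2
    obtain ⟨ε, hε, hεc3, hεc1⟩ : ∃ ε : ℝ, 0 < ε ∧ ε < c₃ ∧ ε < c₁ + 1 := by
      have hmin := lt_min hc3 (show (0:ℝ) < c₁ + 1 by linarith)
      have h1 := min_le_left c₃ (c₁+1)
      have h2 := min_le_right c₃ (c₁+1)
      exact ⟨min c₃ (c₁ + 1) / 2, by linarith, by linarith, by linarith⟩
    obtain ⟨c, hc2c, h1c, hcc3, hcc1⟩ : ∃ c : ℝ, c₂ ≤ c ∧ 1 < c ∧ c - 1 < c₃ ∧ c - 2 < c₁ := by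
      have m1 := max_lt (show c₂ < c₃ + 1 by linarith) (show 1 + ε < c₃ + 1 by linarith)
      have m2 := max_lt (show c₂ < c₁ + 2 by linarith) (show 1 + ε < c₁ + 2 by linarith)
      exact ⟨max c₂ (1 + ε), le_max_left _ _,
        lt_of_lt_of_le (by linarith) (le_max_right _ _), by linarith, by linarith⟩
    obtain ⟨δ, hδ, hδA, hδB⟩ : ∃ δ : ℝ, 0 < δ ∧ δ < 2*c₃ - c₂ + 2 - c ∧ δ < c₁ + 2 - c := by
      have hA : (0:ℝ) < 2*c₃ - c₂ + 2 - c := by linarith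
      have hB : (0:ℝ) < c₁ + 2 - c := by linarith
      have hmin := lt_min hA hB
      have h1 := min_le_left (2*c₃ - c₂ + 2 - c) (c₁ + 2 - c)
      have h2 := min_le_right (2*c₃ - c₂ + 2 - c) (c₁ + 2 - c)
      exact ⟨min (2*c₃ - c₂ + 2 - c) (c₁ + 2 - c) / 2, by linarith, by linarith, by linarith⟩
    set G : ℝ × ℝ → ℝ := fun p =>
      κ^4/4 * ((1-p.1)^(δ-1) * (1-p.2)^(2*c₃ - c₂ + 1 - c - δ)) +
      κ^2/4 * ((1-p.1)^(δ-1) * (1-p.2)^(c₁ + 1 - c - δ)) with hGdef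
    have hsub : {p : ℝ × ℝ | 0 ≤ p.1 ∧ p.1 ≤ p.2 ∧ p.2 < 1}
        ⊆ Set.Ico (0:ℝ) 1 ×ˢ Set.Ico (0:ℝ) 1 := by
      rintro ⟨s,t⟩ ⟨h1, h2, h3⟩
      exact ⟨⟨h1, lt_of_le_of_lt h2 h3⟩, ⟨le_trans h1 h2, h3⟩⟩
    have hGint : IntegrableOn G ({p : ℝ × ℝ | 0 ≤ p.1 ∧ p.1 ≤ p.2 ∧ p.2 < 1}) := by
      apply IntegrableOn.mono_set _ hsub
      have h1 := (stmt12_aux_int (δ-1) (by linarith)).mul_prod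
        (stmt12_aux_int (2*c₃ - c₂ + 1 - c - δ) (by linarith))
      have h2 := (stmt12_aux_int (δ-1) (by linarith)).mul_prod
        (stmt12_aux_int (c₁ + 1 - c - δ) (by linarith))
      rw [Measure.prod_restrict] at h1 h2
      have h3 := (h1.const_mul (κ^4/4)).add (h2.const_mul (κ^2/4))
      rw [IntegrableOn, Measure.volume_eq_prod]
      exact h3
    have hSm : MeasurableSet {p : ℝ × ℝ | 0 ≤ p.1 ∧ p.1 ≤ p.2 ∧ p.2 < 1} := by
      have he : {p : ℝ × ℝ | 0 ≤ p.1 ∧ p.1 ≤ p.2 ∧ p.2 < 1}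
          = {p : ℝ × ℝ | 0 ≤ p.1} ∩ ({p : ℝ × ℝ | p.1 ≤ p.2} ∩ {p : ℝ × ℝ | p.2 < 1}) := rfl
      rw [he]
      exact (measurableSet_le measurable_const measurable_fst).inter
        ((measurableSet_le measurable_fst measurable_snd).inter
          (measurableSet_lt measurable_snd measurable_const))
    have hmf : Measurable (fun p : ℝ × ℝ =>
        (u₀ ⬝ᵥ (R p.1).mulVec u₀) * (u₁ ⬝ᵥ (R p.2).mulVec u₁)) :=
      ((stmt12_aux_meas x y hxm hym ![1,0] ![1,0]).comp measurable_fst).mul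
        ((stmt12_aux_meas x y hxm hym ![-q,-1] ![-q,-1]).comp measurable_snd)
    apply Integrable.mono' hGint hmf.aestronglyMeasurable.restrict
    rw [ae_restrict_iff' hSm]
    refine ae_of_all _ fun p hp => ?_
    obtain ⟨hs0, hst, ht1⟩ := hp
    have hsI : p.1 ∈ Set.Ico (0:ℝ) 1 := ⟨hs0, lt_of_le_of_lt hst ht1⟩
    have htI : p.2 ∈ Set.Ico (0:ℝ) 1 := ⟨le_trans hs0 hst, ht1⟩
    have hys := hy p.1 hsI
    have hyt := hy p.2 htI
    have hP : (0:ℝ) < 1 - p.1 := by linarith [hsI.2]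
    have hP1 : (1:ℝ) - p.1 ≤ 1 := by linarith [hsI.1]
    have hQ : (0:ℝ) < 1 - p.2 := by linarith [htI.2]
    have hQP : (1:ℝ) - p.2 ≤ 1 - p.1 := by linarith
    obtain ⟨hk1s, -, -⟩ := key p.1 hsI
    obtain ⟨hk1t, hk2t, hk3t⟩ := key p.2 htI
    have hv0 : u₀ ⬝ᵥ (R p.1).mulVec u₀ = (2 * y p.1)⁻¹ :=
      stmt12_aux_R0 (x p.1) (y p.1) hys
    have hv1 : u₁ ⬝ᵥ (R p.2).mulVec u₁ = ((q - x p.2)^2 + (y p.2)^2) / (2 * y p.2) :=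
      stmt12_aux_R1 (x p.2) (y p.2) q hyt
    rw [hv0, hv1, Real.norm_eq_abs, abs_of_nonneg (by positivity)]
    have e1 : (2*y p.1)⁻¹ ≤ κ/2 * ((1-p.1)^(δ-1) * (1-p.2)^(1-c-δ)) := by
      calc (2*y p.1)⁻¹ ≤ κ/2 * (1-p.1)^(-c₂) := hk1s
        _ ≤ κ/2 * (1-p.1)^(-c) :=
            mul_le_mul_of_nonneg_left
              (Real.rpow_le_rpow_of_exponent_ge hP hP1 (by linarith)) (by positivity)
        _ = κ/2 * ((1-p.1)^(δ-1) * (1-p.1)^(1-c-δ)) := by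
            rw [← Real.rpow_add hP, show δ-1+(1-c-δ) = -c by ring]
        _ ≤ κ/2 * ((1-p.1)^(δ-1) * (1-p.2)^(1-c-δ)) := by
            have h1 : (1-p.1)^(1-c-δ) ≤ (1-p.2)^(1-c-δ) :=
              Real.rpow_le_rpow_of_nonpos hQ hQP (by linarith)
            have h2 : (0:ℝ) ≤ (1-p.1)^(δ-1) := Real.rpow_nonneg hP.le _
            exact mul_le_mul_of_nonneg_left
              (mul_le_mul_of_nonneg_left h1 h2) (by positivity)
    have e2 : ((q - x p.2)^2 + (y p.2)^2)/(2*y p.2)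
        ≤ κ^3/2 * (1-p.2)^(2*c₃-c₂) + κ/2 * (1-p.2)^c₁ := by
      have hid : ((q - x p.2)^2 + (y p.2)^2)/(2*y p.2)
          = (q - x p.2)^2 * (2*y p.2)⁻¹ + y p.2 / 2 := by
        field_simp
      have e21 : (q - x p.2)^2 ≤ κ^2 * (1-p.2)^(2*c₃) := by
        have hq : (q - x p.2)^2 = |q - x p.2|^2 := (sq_abs _).symm
        rw [hq]
        calc |q - x p.2|^2 ≤ (κ * (1-p.2)^c₃)^2 := by
              apply pow_le_pow_left₀ (abs_nonneg _) hk2t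
          _ = κ^2 * ((1-p.2)^c₃ * (1-p.2)^c₃) := by ring
          _ = κ^2 * (1-p.2)^(2*c₃) := by
              rw [← Real.rpow_add hQ, show c₃+c₃ = 2*c₃ by ring]
      have e22 : (q - x p.2)^2 * (2*y p.2)⁻¹
          ≤ (κ^2 * (1-p.2)^(2*c₃)) * (κ/2 * (1-p.2)^(-c₂)) :=
        mul_le_mul e21 hk1t (by positivity) (by positivity)
      have e23 : (κ^2 * (1-p.2)^(2*c₃)) * (κ/2 * (1-p.2)^(-c₂))
          = κ^3/2 * (1-p.2)^(2*c₃-c₂) := by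
        rw [show (2*c₃-c₂ : ℝ) = 2*c₃ + (-c₂) by ring, Real.rpow_add hQ]
        ring
      rw [hid]
      rw [e23] at e22
      linarith
    have hl : (0:ℝ) ≤ ((q - x p.2)^2 + (y p.2)^2)/(2*y p.2) :=
      div_nonneg (by positivity) (by linarith)
    calc (2*y p.1)⁻¹ * (((q - x p.2)^2 + (y p.2)^2)/(2*y p.2))
        ≤ (κ/2 * ((1-p.1)^(δ-1) * (1-p.2)^(1-c-δ)))
            * (κ^3/2 * (1-p.2)^(2*c₃-c₂) + κ/2 * (1-p.2)^c₁) :=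
          mul_le_mul e1 e2 hl (by positivity)
      _ = G p := by
          rw [hGdef]
          dsimp only
          rw [show (2*c₃ - c₂ + 1 - c - δ : ℝ) = (1-c-δ) + (2*c₃-c₂) by ring,
            show (c₁ + 1 - c - δ : ℝ) = (1-c-δ) + c₁ by ring,
            Real.rpow_add hQ, Real.rpow_add hQ]
          ring
end

section
/- Let K(s,t) = (u_0 u_1ᵗ 1_{s<t} + u_1 u_0ᵗ 1_{s≥t}) R(t) be the integral kernel of the inverse of a Dirac operator with weight R generated by the path x+iy and boundary vectors u_0 = [1,0]ᵗ, u_1 = [−q,−1]ᵗ. Then the pointwise trace satisfies tr K(s,s) = (x(s) − q)/(2 y(s)), and tr(K(s,t)ᵗ K(s,t)) = (1/4)·( ((q − x(s∨t))²/y(s∨t)² ) + 1 )·( y(s∨t)/y(s∧t) ) for the symmetrized version with X-conjugated kernel. -/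
open Matrix

/-- Pointwise traces of the kernel of the inverse of a Dirac operator: with
`u₀ = [1,0]ᵗ`, `u₁ = [-q,-1]ᵗ`, `tr K(s,s) = (x(s)-q)/(2y(s))`, and for the
`X`-conjugated symmetrized kernel,
`tr(K(s,t)ᵀK(s,t)) = (1/4)((q-x(s∨t))²/y(s∨t)² + 1)(y(s∨t)/y(s∧t))`. -/
theorem stmt13 (x y : ℝ → ℝ) (q : ℝ) (hy : ∀ t, 0 < y t) :
    let X : ℝ → Matrix (Fin 2) (Fin 2) ℝ :=
      fun t => (Real.sqrt (y t))⁻¹ • !![1, -x t; 0, y t]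
    let R : ℝ → Matrix (Fin 2) (Fin 2) ℝ := fun t => (1 / 2 : ℝ) • ((X t)ᵀ * X t)
    let u₀ : Fin 2 → ℝ := ![1, 0]
    let u₁ : Fin 2 → ℝ := ![-q, -1]
    let K : ℝ → ℝ → Matrix (Fin 2) (Fin 2) ℝ := fun s t =>
      (if s < t then vecMulVec u₀ u₁ else vecMulVec u₁ u₀) * R t
    let Ksym : ℝ → ℝ → Matrix (Fin 2) (Fin 2) ℝ := fun s t =>
      (1 / 2 : ℝ) • (if s < t then vecMulVec ((X s).mulVec u₀) ((X t).mulVec u₁)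
        else vecMulVec ((X s).mulVec u₁) ((X t).mulVec u₀))
    (∀ s, Matrix.trace (K s s) = (x s - q) / (2 * y s)) ∧
    (∀ s t, Matrix.trace ((Ksym s t)ᵀ * Ksym s t) =
      (1 / 4) * ((q - x (max s t)) ^ 2 / (y (max s t)) ^ 2 + 1) *
        (y (max s t) / y (min s t))) := by
  intro X R u₀ u₁ K Ksym
  constructor
  · intro s
    have h0 : (0:ℝ) < y s := hy s
    have hs : Real.sqrt (y s) * Real.sqrt (y s) = y s := Real.mul_self_sqrt h0.le
    have hsp : Real.sqrt (y s) ≠ 0 := by positivity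
    simp only [K, R, X, u₀, u₁, lt_irrefl, if_false, Matrix.trace_fin_two, Matrix.mul_apply,
      Fin.sum_univ_two, vecMulVec_apply, Matrix.smul_apply, Matrix.transpose_apply,
      Matrix.cons_val_zero, Matrix.cons_val_one, Matrix.head_cons, Matrix.of_apply,
      Matrix.cons_val', Matrix.empty_val', Matrix.cons_val_fin_one, Matrix.head_fin_const,
      smul_eq_mul]
    field_simp
    ring_nf
    simp only [Real.sq_sqrt h0.le]
    ring
  · intro s t
    have h0s : (0:ℝ) < y s := hy s
    have h0t : (0:ℝ) < y t := hy t
    have hs : Real.sqrt (y s) * Real.sqrt (y s) = y s := Real.mul_self_sqrt h0s.le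
    have ht : Real.sqrt (y t) * Real.sqrt (y t) = y t := Real.mul_self_sqrt h0t.le
    have hsp : Real.sqrt (y s) ≠ 0 := by positivity
    have htp : Real.sqrt (y t) ≠ 0 := by positivity
    have hs4 : Real.sqrt (y s) ^ 4 = y s ^ 2 := by
      rw [show (4:ℕ) = 2*2 from rfl, pow_mul, Real.sq_sqrt h0s.le]
    have ht4 : Real.sqrt (y t) ^ 4 = y t ^ 2 := by
      rw [show (4:ℕ) = 2*2 from rfl, pow_mul, Real.sq_sqrt h0t.le]
    rcases lt_or_ge s t with hlt | hge
    · rw [max_eq_right hlt.le, min_eq_left hlt.le]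
      simp only [Ksym, X, u₀, u₁, if_pos hlt, Matrix.trace_fin_two, Matrix.mul_apply,
        Fin.sum_univ_two, vecMulVec_apply, Matrix.smul_apply, Matrix.transpose_apply,
        Matrix.mulVec, dotProduct, Matrix.cons_val_zero, Matrix.cons_val_one,
        Matrix.head_cons, Matrix.of_apply, Matrix.cons_val', Matrix.empty_val',
        Matrix.cons_val_fin_one, Matrix.head_fin_const, smul_eq_mul]
      field_simp
      ring_nf
      simp only [Real.sq_sqrt h0s.le, Real.sq_sqrt h0t.le, hs4, ht4]
      ring
    · rw [max_eq_left hge, min_eq_right hge]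
      simp only [Ksym, X, u₀, u₁, if_neg (not_lt.mpr hge), Matrix.trace_fin_two,
        Matrix.mul_apply, Fin.sum_univ_two, vecMulVec_apply, Matrix.smul_apply,
        Matrix.transpose_apply, Matrix.mulVec, dotProduct, Matrix.cons_val_zero,
        Matrix.cons_val_one, Matrix.head_cons, Matrix.of_apply, Matrix.cons_val',
        Matrix.empty_val', Matrix.cons_val_fin_one, Matrix.head_fin_const, smul_eq_mul]
      field_simp
      ring_nf
      simp only [Real.sq_sqrt h0s.le, Real.sq_sqrt h0t.le, hs4, ht4]
      ring
end
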